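/- arXiv:0706.0287 — 2 statements merged into one kernel-verified Lean document; each statement's English description precedes it below -/
import Mathlib

section
/- For every grouplike element g ∈ H and every h ∈ H one has g·h·g⁻¹ = σ(h₁ ⊗ g)·h₂·σ⁻¹(h₃ ⊗ g); in particular, the inner automorphism of H induced by a grouplike element is co-inner. -/
open TensorProduct Coalgebra HopfAlgebra

variable {k H : Type*} [Field k] [Ring H] [HopfAlgebra k H]

/-- The antipode of `H`, as a linear map. -/
local notation "𝐒" => HopfAlgebra.antipode (R := k)

/-- Convolution product on the dual of `H`: `(conv f g) h = f h₁ * g h₂`. -/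
noncomputable def conv (f g : H →ₗ[k] k) : H →ₗ[k] k :=
  (LinearMap.mul' k k) ∘ₗ (TensorProduct.map f g) ∘ₗ (Coalgebra.comul (R := k))

/-- `h ↦ f h₁ • h₂`. -/
noncomputable def lT (f : H →ₗ[k] k) : H →ₗ[k] H :=
  (TensorProduct.lid k H).toLinearMap ∘ₗ (f.rTensor H) ∘ₗ (Coalgebra.comul (R := k))

/-- The Sweedler sum `h ↦ f h₁ • p h₃ • g h₂`. -/
noncomputable def sw3 (f : H →ₗ[k] k) (g : H →ₗ[k] H) (p : H →ₗ[k] k) : H →ₗ[k] H :=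
  (TensorProduct.lid k H).toLinearMap
    ∘ₗ (TensorProduct.rid k (k ⊗[k] H)).toLinearMap
    ∘ₗ (TensorProduct.map (TensorProduct.map f g) p)
    ∘ₗ ((Coalgebra.comul (R := k)).rTensor H)
    ∘ₗ (Coalgebra.comul (R := k))

/-- `χ(h) = α(h₂) • S⁻²(h₁)`, the generalized Nakayama automorphism. -/
noncomputable def chiMap (Sinv : H →ₗ[k] H) (f : H →ₗ[k] k) : H →ₗ[k] H :=
  (TensorProduct.rid k H).toLinearMap
    ∘ₗ (TensorProduct.map (Sinv ∘ₗ Sinv) f)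
    ∘ₗ (Coalgebra.comul (R := k))

/-- `f(R¹) • R²` for `R = R¹ ⊗ R² ∈ H ⊗ H`. -/
noncomputable def lap (f : H →ₗ[k] k) : (H ⊗[k] H) →ₗ[k] H :=
  (TensorProduct.lid k H).toLinearMap ∘ₗ (f.rTensor H)

/-- `f(R²) • R¹` for `R = R¹ ⊗ R² ∈ H ⊗ H`. -/
noncomputable def rap (f : H →ₗ[k] k) : (H ⊗[k] H) →ₗ[k] H :=
  (TensorProduct.rid k H).toLinearMap ∘ₗ (LinearMap.lTensor H f)

/-- The Drinfeld element `u = S(R²)R¹`. -/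
noncomputable def uElt (Rm : H ⊗[k] H) : H :=
  (LinearMap.mul' k H)
    ((TensorProduct.comm k H H)
      ((LinearMap.lTensor H (HopfAlgebra.antipode (R := k))) Rm))

/-- Convolution product on the dual of `H ⊗ H`. -/
noncomputable def conv2 (f g : (H ⊗[k] H) →ₗ[k] k) : (H ⊗[k] H) →ₗ[k] k :=
  (LinearMap.mul' k k) ∘ₗ (TensorProduct.map f g) ∘ₗ (Coalgebra.comul (R := k) (A := H ⊗[k] H))

/-- `(h ⊗ l) ↦ σ(h₂ ⊗ l₂) • (l₁ * h₁)`. -/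
noncomputable def ac1 (σ : (H ⊗[k] H) →ₗ[k] k) : (H ⊗[k] H) →ₗ[k] H :=
  (TensorProduct.rid k H).toLinearMap
    ∘ₗ (TensorProduct.map ((LinearMap.mul' k H) ∘ₗ (TensorProduct.comm k H H).toLinearMap) σ)
    ∘ₗ (TensorProduct.tensorTensorTensorComm k H H H H).toLinearMap
    ∘ₗ (TensorProduct.map (Coalgebra.comul (R := k)) (Coalgebra.comul (R := k)))

/-- `(h ⊗ l) ↦ σ(h₁ ⊗ l₁) • (h₂ * l₂)`. -/
noncomputable def ac2 (σ : (H ⊗[k] H) →ₗ[k] k) : (H ⊗[k] H) →ₗ[k] H :=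
  (TensorProduct.lid k H).toLinearMap
    ∘ₗ (TensorProduct.map σ (LinearMap.mul' k H))
    ∘ₗ (TensorProduct.tensorTensorTensorComm k H H H H).toLinearMap
    ∘ₗ (TensorProduct.map (Coalgebra.comul (R := k)) (Coalgebra.comul (R := k)))

/-- `(h ⊗ l) ↦ ρ(h₁ ⊗ l₁) * lam(h₂ * l₂) * τ(h₃ ⊗ l₃)`. -/
noncomputable def trip (lam : H →ₗ[k] k) (ρ τ : (H ⊗[k] H) →ₗ[k] k) : (H ⊗[k] H) →ₗ[k] k :=
  (LinearMap.mul' k k)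
    ∘ₗ ((LinearMap.mul' k k).rTensor k)
    ∘ₗ (TensorProduct.map (TensorProduct.map ρ (lam ∘ₗ (LinearMap.mul' k H))) τ)
    ∘ₗ ((TensorProduct.tensorTensorTensorComm k H H H H).toLinearMap.rTensor (H ⊗[k] H))
    ∘ₗ (TensorProduct.tensorTensorTensorComm k (H ⊗[k] H) H (H ⊗[k] H) H).toLinearMap
    ∘ₗ (TensorProduct.map
          (((Coalgebra.comul (R := k)).rTensor H) ∘ₗ (Coalgebra.comul (R := k)))
          (((Coalgebra.comul (R := k)).rTensor H) ∘ₗ (Coalgebra.comul (R := k))))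

/-- `u(h) = σ(h₂ ⊗ S h₁)`. -/
noncomputable def uF (σ : (H ⊗[k] H) →ₗ[k] k) : H →ₗ[k] k :=
  σ ∘ₗ (TensorProduct.comm k H H).toLinearMap
    ∘ₗ ((HopfAlgebra.antipode (R := k)).rTensor H) ∘ₗ (Coalgebra.comul (R := k))

/-- `v(h) = σ(h₁ ⊗ S h₂)`. -/
noncomputable def vF (σ : (H ⊗[k] H) →ₗ[k] k) : H →ₗ[k] k :=
  σ ∘ₗ (LinearMap.lTensor H (HopfAlgebra.antipode (R := k))) ∘ₗ (Coalgebra.comul (R := k))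

/-- `u⁻¹(h) = σ(S²(h₂) ⊗ h₁)`. -/
noncomputable def uinvF (σ : (H ⊗[k] H) →ₗ[k] k) : H →ₗ[k] k :=
  σ ∘ₗ (((HopfAlgebra.antipode (R := k)) ∘ₗ (HopfAlgebra.antipode (R := k))).rTensor H)
    ∘ₗ (TensorProduct.comm k H H).toLinearMap ∘ₗ (Coalgebra.comul (R := k))

/-- `v⁻¹(h) = σ(S²(h₁) ⊗ h₂)`. -/
noncomputable def vinvF (σ : (H ⊗[k] H) →ₗ[k] k) : H →ₗ[k] k :=
  σ ∘ₗ (((HopfAlgebra.antipode (R := k)) ∘ₗ (HopfAlgebra.antipode (R := k))).rTensor H)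
    ∘ₗ (Coalgebra.comul (R := k))

/-!
Put `f = σ(· ⊗ g)` and `f' = σ'(· ⊗ g)`. Since `Δ g = g ⊗ g`, the relation `σ * σ⁻¹ = ε` restricts
to `f * f' = ε`, and almost commutativity with `l = g` reads `g h₁ f(h₂) = f(h₁) h₂ g`.
In the convolution algebra of linear endomorphisms of `H`, left and right multiplication by `g`
are convolution with `c_g = ε(·) g`, so with `F`, `F'` the scalar-valued images of `f`, `f'` the
claim `g · id · g⁻¹ = F * id * F'` is a computation in a monoid:
`c_g id c_{g⁻¹} = c_g (id F) F' c_{g⁻¹} = F id c_g F' c_{g⁻¹} = F id F' c_g c_{g⁻¹} = F id F'`.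
-/

open LinearMap WithConv

lemma isGroupLikeElem_of_comul_eq_tmul_self {R A : Type*} [CommRing R] [IsDomain R]
    [AddCommGroup A] [Module R A] [Module.IsTorsionFree R A] [Coalgebra R A] {a : A}
    (ha : a ≠ 0) (hΔ : comul (R := R) a = a ⊗ₜ[R] a) : IsGroupLikeElem R a where
  counit_eq_one := by
    have h := congr(TensorProduct.lid R A $(rTensor_counit_comul (R := R) a))
    rw [hΔ, rTensor_tmul, TensorProduct.lid_tmul, TensorProduct.lid_tmul, one_smul] at h
    have h' : (counit (R := R) a - 1) • a = 0 := by rw [sub_smul, one_smul, h, sub_self]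
    simpa [sub_eq_zero, ha] using h'
  comul_eq_tmul_self := hΔ

lemma mul_mul_eq_mul_mul_of_intertwine {M : Type*} [Monoid M] {u v x f f' : M}
    (huv : u * v = 1) (hff' : f * f' = 1) (hf' : Commute u f') (hx : u * (x * f) = f * x * u) :
    u * x * v = f * x * f' :=
  calc u * x * v = u * (x * f) * f' * v := by simp only [mul_assoc, hff', mul_one]
    _ = f * x * (u * f') * v := by rw [hx]; simp only [mul_assoc]
    _ = f * x * f' := by rw [hf'.eq]; simp only [mul_assoc, huv, mul_one]

section Convolution

variable {R C A : Type*} [CommSemiring R] [AddCommMonoid C] [Module R C] [Coalgebra R C]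
  [Semiring A] [Algebra R A]

noncomputable def counitSMul (a : A) : WithConv (C →ₗ[R] A) :=
  toConv (toSpanSingleton R A a ∘ₗ counit)

noncomputable def algebraMapConv (φ : C →ₗ[R] R) : WithConv (C →ₗ[R] A) :=
  toConv (Algebra.linearMap R A ∘ₗ φ)

lemma counitSMul_mul (a : A) (T : WithConv (C →ₗ[R] A)) :
    counitSMul a * T = toConv (mulLeft R a ∘ₗ T.ofConv) := by
  ext c
  simp only [counitSMul, convMul_apply, ← map_comp_rTensor, comp_apply, rTensor_counit_comul]
  simp

lemma mul_counitSMul (T : WithConv (C →ₗ[R] A)) (a : A) :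
    T * counitSMul a = toConv (mulRight R a ∘ₗ T.ofConv) := by
  ext c
  simp only [counitSMul, convMul_apply, ← map_comp_lTensor, comp_apply, lTensor_counit_comul]
  simp

lemma counitSMul_mul_counitSMul (a b : A) :
    counitSMul (R := R) (C := C) a * counitSMul b = counitSMul (a * b) := by
  rw [counitSMul_mul]
  ext c
  simp [counitSMul]

lemma counitSMul_one : counitSMul (R := R) (C := C) (1 : A) = 1 := by
  ext c
  simp [counitSMul, Algebra.algebraMap_eq_smul_one]

lemma commute_counitSMul_algebraMapConv (a : A) (φ : C →ₗ[R] R) :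
    Commute (counitSMul a) (algebraMapConv φ) := by
  rw [Commute, SemiconjBy, counitSMul_mul, mul_counitSMul]
  ext c
  simp [algebraMapConv, Algebra.commutes]

end Convolution

lemma sw3_id_eq (f p : H →ₗ[k] k) :
    sw3 f LinearMap.id p = (algebraMapConv f * toConv LinearMap.id * algebraMapConv p).ofConv := by
  simp only [sw3, algebraMapConv, LinearMap.convMul_def, ofConv_toConv, ← comp_assoc,
    ← map_comp_rTensor]
  congr 2
  ext x y z
  simp [Algebra.smul_def, Algebra.commutes (p z)]

section Grouplike

variable {g : H}

lemma conv2_apply_tmul_of_isGroupLikeElem (σ σ' : (H ⊗[k] H) →ₗ[k] k)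
    (hg : IsGroupLikeElem k g) (h : H) :
    conv2 σ σ' (h ⊗ₜ[k] g) =
      conv (σ ∘ₗ (TensorProduct.mk k H H).flip g) (σ' ∘ₗ (TensorProduct.mk k H H).flip g) h := by
  simp only [conv2, conv, comp_apply, TensorProduct.comul_tmul, hg.comul_eq_tmul_self]
  induction comul (R := k) h using TensorProduct.induction_on with
  | zero => simp
  | tmul x y => simp
  | add x y hx hy => simp_all [TensorProduct.add_tmul]

lemma algebraMapConv_flip_mul_eq_one {σ σ' : (H ⊗[k] H) →ₗ[k] k}
    (hσ : conv2 σ σ' = Coalgebra.counit (R := k) (A := H ⊗[k] H)) (hg : IsGroupLikeElem k g) :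
    algebraMapConv (A := H) (σ ∘ₗ (TensorProduct.mk k H H).flip g) *
      algebraMapConv (σ' ∘ₗ (TensorProduct.mk k H H).flip g) = 1 := by
  have hconv : conv (σ ∘ₗ (TensorProduct.mk k H H).flip g) (σ' ∘ₗ (TensorProduct.mk k H H).flip g) =
      Coalgebra.counit := by
    ext h
    rw [← conv2_apply_tmul_of_isGroupLikeElem σ σ' hg, hσ]
    simp [hg.counit_eq_one]
  calc _ = toConv ((Algebra.ofId k H).toLinearMap ∘ₗ
          conv (σ ∘ₗ (TensorProduct.mk k H H).flip g) (σ' ∘ₗ (TensorProduct.mk k H H).flip g)) :=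
        congr(toConv $(algHom_comp_convMul_distrib (Algebra.ofId k H) _ _)).symm
    _ = 1 := by rw [hconv]; rfl

lemma ac1_apply_tmul_of_isGroupLikeElem (σ : (H ⊗[k] H) →ₗ[k] k) (hg : IsGroupLikeElem k g)
    (h : H) :
    ac1 σ (h ⊗ₜ[k] g) = (counitSMul g * (toConv LinearMap.id *
      algebraMapConv (σ ∘ₗ (TensorProduct.mk k H H).flip g))).ofConv h := by
  simp only [ac1, algebraMapConv, counitSMul_mul, convMul_apply, comp_apply,
    TensorProduct.map_tmul, hg.comul_eq_tmul_self]
  induction comul (R := k) h using TensorProduct.induction_on with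
  | zero => simp
  | tmul x y => simp [Algebra.smul_def, Algebra.commutes, mul_assoc]
  | add x y hx hy => simp_all [TensorProduct.add_tmul, mul_add]

lemma ac2_apply_tmul_of_isGroupLikeElem (σ : (H ⊗[k] H) →ₗ[k] k) (hg : IsGroupLikeElem k g)
    (h : H) :
    ac2 σ (h ⊗ₜ[k] g) = (algebraMapConv (σ ∘ₗ (TensorProduct.mk k H H).flip g) *
      toConv LinearMap.id * counitSMul g).ofConv h := by
  simp only [ac2, algebraMapConv, mul_counitSMul, convMul_apply, comp_apply,
    TensorProduct.map_tmul, hg.comul_eq_tmul_self]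
  induction comul (R := k) h using TensorProduct.induction_on with
  | zero => simp
  | tmul x y => simp [Algebra.smul_def, mul_assoc]
  | add x y hx hy => simp_all [TensorProduct.add_tmul, add_mul]

end Grouplike

theorem inner_of_grouplike_is_coinner_general
    (σ σ' : (H ⊗[k] H) →ₗ[k] k)
    (hσinv_r : conv2 σ σ' = Coalgebra.counit (R := k) (A := H ⊗[k] H))
    (hσ4 : ∀ h l : H, ac1 σ (h ⊗ₜ[k] l) = ac2 σ (h ⊗ₜ[k] l)) :
    ∀ g : H, g ≠ 0 → Coalgebra.comul (R := k) g = g ⊗ₜ[k] g →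
      ∀ h : H, g * h * 𝐒 g =
        sw3 (σ ∘ₗ ((TensorProduct.mk k H H).flip g)) LinearMap.id
          (σ' ∘ₗ ((TensorProduct.mk k H H).flip g)) h := by
  intro g hg0 hΔg h
  have hg : IsGroupLikeElem k g := isGroupLikeElem_of_comul_eq_tmul_self hg0 hΔg
  have hunit : counitSMul g * counitSMul (𝐒 g) = (1 : WithConv (H →ₗ[k] H)) := by
    rw [counitSMul_mul_counitSMul, hg.mul_antipode_cancel, counitSMul_one]
  have hconj : counitSMul g * (toConv LinearMap.id *
      algebraMapConv (σ ∘ₗ (TensorProduct.mk k H H).flip g)) =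
      algebraMapConv (σ ∘ₗ (TensorProduct.mk k H H).flip g) * toConv LinearMap.id *
        counitSMul g := by
    ext x
    rw [← ac1_apply_tmul_of_isGroupLikeElem σ hg, ← ac2_apply_tmul_of_isGroupLikeElem σ hg, hσ4]
  have hconj_eq := mul_mul_eq_mul_mul_of_intertwine hunit
    (algebraMapConv_flip_mul_eq_one hσinv_r hg) (commute_counitSMul_algebraMapConv _ _) hconj
  rw [sw3_id_eq, ← hconj_eq, mul_counitSMul, counitSMul_mul]
  rfl

/-- In an almost commutative Hopf algebra $(H,σ)$, the inner automorphism
induced by a grouplike $g$ is co-inner: $g h g^{-1} = σ(h_1 ⊗ g) h_2 σ^{-1}(h_3 ⊗ g)$. -/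
theorem inner_of_grouplike_is_coinner
    (σ σ' : (H ⊗[k] H) →ₗ[k] k)
    (hσinv_r : conv2 σ σ' = Coalgebra.counit (R := k) (A := H ⊗[k] H))
    (hσinv_l : conv2 σ' σ = Coalgebra.counit (R := k) (A := H ⊗[k] H))
    (hσ4 : ∀ h l : H, ac1 σ (h ⊗ₜ[k] l) = ac2 σ (h ⊗ₜ[k] l)) :
    ∀ g : H, g ≠ 0 → Coalgebra.comul (R := k) g = g ⊗ₜ[k] g →
      ∀ h : H, g * h * 𝐒 g =
        sw3 (σ ∘ₗ ((TensorProduct.mk k H H).flip g)) LinearMap.id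
          (σ' ∘ₗ ((TensorProduct.mk k H H).flip g)) h :=
  inner_of_grouplike_is_coinner_general σ σ' hσinv_r hσ4
end

section
/- For every p ∈ H* and all h, l ∈ H one has λ(h l₁)·p(l₂) = p(S⁻¹(h₂)·a⁻¹)·λ(h₁ l) and p(l₁)·λ(l₂ h) = p(S⁻¹(h₁))·λ(l h₂); in other words, (λ↼h)*p = λ↼(p(S⁻¹(h₂)a⁻¹)h₁) and p*(h⇀λ) = (p(S⁻¹(h₁))h₂)⇀λ, where (λ↼h)(l) = λ(hl) and (h⇀λ)(l) = λ(lh). -/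
open TensorProduct Coalgebra HopfAlgebra

variable {k H : Type*} [Field k] [Ring H] [HopfAlgebra k H]

/-- The antipode of `H`, as a linear map. -/
local notation "𝐒" => HopfAlgebra.antipode (R := k)

/-! Both identities are `p` applied to identities in `H`:
`λ(h l₁) l₂ = S⁻¹(λ(h₁ l) h₂) a⁻¹` and `λ(l₂ h) l₁ = S⁻¹(λ(l h₂) h₁)`.
For the first, substitute `h ⊗ 1 = h₁ ⊗ S⁻¹(h₃) h₂` into the left side, which is linear in `h`;
the modularity `λ(x₁) x₂ = λ(x) a⁻¹` at `x = h₁ l` then collapses the sum.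
The second is the mirror image, with `1 ⊗ h = h₂ S⁻¹(h₁) ⊗ h₃` and the left-integral property
in the form `λ(x₂) x₁ = λ(x) 1` at `x = l h₂`. -/

namespace HopfAlgebra

variable {R A : Type*} [CommSemiring R] [Semiring A] [HopfAlgebra R A]
  {Sinv : A →ₗ[R] A} {x : A} {ι : Type*} {κ : ι → Type*}

lemma sum_mul_antipodeInv_eq_algebraMap_counit (hl : Function.LeftInverse Sinv (antipode R))
    (hr : Function.RightInverse Sinv (antipode R)) (r : Repr R x ι) :
    ∑ i ∈ r.index, r.right i * Sinv (r.left i) = algebraMap R A (counit x) := by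
  refine hl.injective ?_
  rw [map_sum, Algebra.algebraMap_eq_smul_one, map_smul, antipode_one,
    ← sum_mul_antipode_eq_smul r]
  simp only [antipode_mul_antidistrib, hr _]

lemma sum_antipodeInv_mul_eq_algebraMap_counit (hl : Function.LeftInverse Sinv (antipode R))
    (hr : Function.RightInverse Sinv (antipode R)) (r : Repr R x ι) :
    ∑ i ∈ r.index, Sinv (r.right i) * r.left i = algebraMap R A (counit x) := by
  refine hl.injective ?_
  rw [map_sum, Algebra.algebraMap_eq_smul_one, map_smul, antipode_one,
    ← sum_antipode_mul_eq_smul r]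
  simp only [antipode_mul_antidistrib, hr _]

/-- `x₁ ⊗ S⁻¹(x₃) x₂ = x ⊗ 1`. -/
lemma sum_tmul_antipodeInv_mul_eq (hl : Function.LeftInverse Sinv (antipode R))
    (hr : Function.RightInverse Sinv (antipode R)) (r : Repr R x ι)
    (r₁ : ∀ i, Repr R (r.left i) (κ i)) :
    ∑ i ∈ r.index, ∑ j ∈ (r₁ i).index,
      (r₁ i).left j ⊗ₜ[R] (Sinv (r.right i) * (r₁ i).right j) = x ⊗ₜ[R] 1 := by
  have coassoc := congr(LinearMap.lTensor A
    (LinearMap.mul' R A ∘ₗ Sinv.rTensor A ∘ₗ (TensorProduct.comm R A A).toLinearMap)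
    $(sum_tmul_tmul_eq r r₁ fun i ↦ ℛ R (r.right i)))
  simp only [map_sum, LinearMap.lTensor_tmul, LinearMap.comp_apply, LinearEquiv.coe_coe,
    TensorProduct.comm_tmul, LinearMap.rTensor_tmul, LinearMap.mul'_apply] at coassoc
  simp only [← TensorProduct.tmul_sum,
    sum_antipodeInv_mul_eq_algebraMap_counit hl hr] at coassoc
  rw [coassoc]
  simpa only [map_sum, LinearMap.lTensor_tmul, Algebra.linearMap_apply, map_one] using
    congr(LinearMap.lTensor A (Algebra.linearMap R A) $(sum_tmul_counit_eq r))

/-- `x₂ S⁻¹(x₁) ⊗ x₃ = 1 ⊗ x`. -/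
lemma sum_mul_antipodeInv_tmul_eq (hl : Function.LeftInverse Sinv (antipode R))
    (hr : Function.RightInverse Sinv (antipode R)) (r : Repr R x ι)
    (r₂ : ∀ i, Repr R (r.right i) (κ i)) :
    ∑ i ∈ r.index, ∑ j ∈ (r₂ i).index,
      ((r₂ i).left j * Sinv (r.left i)) ⊗ₜ[R] (r₂ i).right j = 1 ⊗ₜ[R] x := by
  have coassoc := congr((LinearMap.rTensor A
    (LinearMap.mul' R A ∘ₗ Sinv.lTensor A ∘ₗ (TensorProduct.comm R A A).toLinearMap) ∘ₗ
      (TensorProduct.assoc R A A A).symm.toLinearMap)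
    $(sum_tmul_tmul_eq r (fun i ↦ ℛ R (r.left i)) r₂))
  simp only [map_sum, LinearMap.rTensor_tmul, LinearMap.comp_apply, LinearEquiv.coe_coe,
    TensorProduct.assoc_symm_tmul, TensorProduct.comm_tmul, LinearMap.lTensor_tmul,
    LinearMap.mul'_apply] at coassoc
  simp only [← TensorProduct.sum_tmul,
    sum_mul_antipodeInv_eq_algebraMap_counit hl hr] at coassoc
  rw [← coassoc]
  simpa only [map_sum, LinearMap.rTensor_tmul, Algebra.linearMap_apply, map_one] using
    congr(LinearMap.rTensor A (Algebra.linearMap R A) $(sum_counit_tmul_eq r))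

lemma sum_antipodeInv_mul_mul_apply (hl : Function.LeftInverse Sinv (antipode R))
    (hr : Function.RightInverse Sinv (antipode R)) (T : A →ₗ[R] A) (r : Repr R x ι)
    (r₁ : ∀ i, Repr R (r.left i) (κ i)) :
    ∑ i ∈ r.index, Sinv (r.right i) * ∑ j ∈ (r₁ i).index, (r₁ i).right j * T ((r₁ i).left j)
      = T x := by
  simpa [Finset.mul_sum, mul_assoc] using congr((LinearMap.mul' R A ∘ₗ
    (TensorProduct.comm R A A).toLinearMap ∘ₗ T.rTensor A)
      $(sum_tmul_antipodeInv_mul_eq hl hr r r₁))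

lemma sum_apply_mul_mul_antipodeInv (hl : Function.LeftInverse Sinv (antipode R))
    (hr : Function.RightInverse Sinv (antipode R)) (T : A →ₗ[R] A) (r : Repr R x ι)
    (r₂ : ∀ i, Repr R (r.right i) (κ i)) :
    ∑ i ∈ r.index, (∑ j ∈ (r₂ i).index, T ((r₂ i).right j) * (r₂ i).left j) * Sinv (r.left i)
      = T x := by
  simpa [Finset.sum_mul, mul_assoc] using congr((LinearMap.mul' R A ∘ₗ
    (TensorProduct.comm R A A).toLinearMap ∘ₗ T.lTensor A)
      $(sum_mul_antipodeInv_tmul_eq hl hr r r₂))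

end HopfAlgebra

noncomputable def rT (f : H →ₗ[k] k) : H →ₗ[k] H :=
  (TensorProduct.rid k H).toLinearMap ∘ₗ (f.lTensor H) ∘ₗ (Coalgebra.comul (R := k))

lemma lT_apply_eq_sum {x : H} {ι : Type*} (f : H →ₗ[k] k) (r : Repr k x ι) :
    lT f x = ∑ i ∈ r.index, f (r.left i) • r.right i := by
  simp [lT, ← r.eq]

lemma rT_apply_eq_sum {x : H} {ι : Type*} (f : H →ₗ[k] k) (r : Repr k x ι) :
    rT f x = ∑ i ∈ r.index, f (r.right i) • r.left i := by
  simp [rT, ← r.eq]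

lemma conv_apply_eq_apply_lT (f p : H →ₗ[k] k) (x : H) : conv f p x = p (lT f x) := by
  simp [conv, lT_apply_eq_sum f (ℛ k x), ← (ℛ k x).eq]

lemma conv_apply_eq_apply_rT (p f : H →ₗ[k] k) (x : H) : conv p f x = p (rT f x) := by
  simp [conv, rT_apply_eq_sum f (ℛ k x), ← (ℛ k x).eq, mul_comm]

lemma rT_eq_smul_one_of_conv_eq (lam : H →ₗ[k] k)
    (hlam : ∀ f : H →ₗ[k] k, conv f lam = f 1 • lam) (x : H) : rT lam x = lam x • 1 := by
  rw [← sub_eq_zero, ← Module.forall_dual_apply_eq_zero_iff k]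
  intro φ
  rw [map_sub, sub_eq_zero, ← conv_apply_eq_apply_rT, hlam φ]
  simp [mul_comm]

lemma lT_comp_mulLeft_apply (lam : H →ₗ[k] k) (g : H) (hg : ∀ z, lT lam z = lam z • g)
    {Sinv : H →ₗ[k] H} (hl : Function.LeftInverse Sinv 𝐒) (hr : Function.RightInverse Sinv 𝐒)
    (h l : H) :
    lT (lam ∘ₗ LinearMap.mulLeft k h) l = Sinv (lT (lam ∘ₗ LinearMap.mulRight k l) h) * g := by
  let T : H →ₗ[k] H :=
    { toFun u := lT (lam ∘ₗ LinearMap.mulLeft k u) l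
      map_add' u v := by
        simp [lT_apply_eq_sum _ (ℛ k l), add_mul, add_smul, Finset.sum_add_distrib]
      map_smul' c u := by simp [lT_apply_eq_sum _ (ℛ k l), Finset.smul_sum, smul_smul] }
  have hT (y : H) :
      ∑ j ∈ (ℛ k y).index, (ℛ k y).right j * T ((ℛ k y).left j) = lam (y * l) • g := by
    rw [← hg, lT_apply_eq_sum lam ((ℛ k y).mul (ℛ k l)), Repr.mul_index, Finset.sum_product]
    simp [T, lT_apply_eq_sum _ (ℛ k l), Finset.mul_sum]
  calc lT (lam ∘ₗ LinearMap.mulLeft k h) l = T h := rfl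
    _ = ∑ i ∈ (ℛ k h).index, Sinv ((ℛ k h).right i) * (lam ((ℛ k h).left i * l) • g) := by
      simp only [← hT]
      exact (sum_antipodeInv_mul_mul_apply hl hr T (ℛ k h) _).symm
    _ = Sinv (lT (lam ∘ₗ LinearMap.mulRight k l) h) * g := by
      simp [lT_apply_eq_sum _ (ℛ k h), Finset.sum_mul]

lemma rT_comp_mulRight_apply (lam : H →ₗ[k] k) (hlam : ∀ z, rT lam z = lam z • 1)
    {Sinv : H →ₗ[k] H} (hl : Function.LeftInverse Sinv 𝐒) (hr : Function.RightInverse Sinv 𝐒)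
    (h l : H) :
    rT (lam ∘ₗ LinearMap.mulRight k h) l = Sinv (rT (lam ∘ₗ LinearMap.mulLeft k l) h) := by
  let T : H →ₗ[k] H :=
    { toFun v := rT (lam ∘ₗ LinearMap.mulRight k v) l
      map_add' u v := by
        simp [rT_apply_eq_sum _ (ℛ k l), mul_add, add_smul, Finset.sum_add_distrib]
      map_smul' c u := by simp [rT_apply_eq_sum _ (ℛ k l), Finset.smul_sum, smul_smul] }
  have hT (y : H) :
      ∑ j ∈ (ℛ k y).index, T ((ℛ k y).right j) * (ℛ k y).left j = lam (l * y) • 1 := by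
    rw [← hlam, rT_apply_eq_sum lam ((ℛ k l).mul (ℛ k y)), Repr.mul_index, Finset.sum_product,
      Finset.sum_comm]
    simp [T, rT_apply_eq_sum _ (ℛ k l), Finset.sum_mul]
  calc rT (lam ∘ₗ LinearMap.mulRight k h) l = T h := rfl
    _ = ∑ i ∈ (ℛ k h).index, (lam (l * (ℛ k h).right i) • 1) * Sinv ((ℛ k h).left i) := by
      simp only [← hT]
      exact (sum_apply_mul_mul_antipodeInv hl hr T (ℛ k h) _).symm
    _ = Sinv (rT (lam ∘ₗ LinearMap.mulLeft k l) h) := by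
      simp [rT_apply_eq_sum _ (ℛ k h)]

theorem integral_convolution_shift_general
    (lam : H →ₗ[k] k)
    (hlam_int : ∀ f : H →ₗ[k] k, conv f lam = f 1 • lam)
    (a : H)
    (ha_mod : ∀ h : H, lT lam h = lam h • (𝐒 a))
    (Sinv : H →ₗ[k] H) (hSinv_l : ∀ h : H, Sinv (𝐒 h) = h)
    (hSinv_r : ∀ h : H, 𝐒 (Sinv h) = h) :
    ∀ (p : H →ₗ[k] k) (h l : H),
      (conv (lam ∘ₗ LinearMap.mulLeft k h) p l =
        conv (lam ∘ₗ LinearMap.mulRight k l)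
          (p ∘ₗ (LinearMap.mulRight k (𝐒 a)) ∘ₗ Sinv) h) ∧
      (conv p (lam ∘ₗ LinearMap.mulRight k h) l =
        conv (p ∘ₗ Sinv) (lam ∘ₗ LinearMap.mulLeft k l) h) := by
  intro p h l
  refine ⟨?_, ?_⟩
  · rw [conv_apply_eq_apply_lT, conv_apply_eq_apply_lT,
      lT_comp_mulLeft_apply lam (𝐒 a) ha_mod hSinv_l hSinv_r]
    rfl
  · rw [conv_apply_eq_apply_rT, conv_apply_eq_apply_rT,
      rT_comp_mulRight_apply lam (rT_eq_smul_one_of_conv_eq lam hlam_int) hSinv_l hSinv_r]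
    rfl

/-- For every $p ∈ H^*$ and all $h, l ∈ H$:
$λ(h l_1) p(l_2) = p(S^{-1}(h_2) a^{-1}) λ(h_1 l)$ and
$p(l_1) λ(l_2 h) = p(S^{-1}(h_1)) λ(l h_2)$. -/
theorem integral_convolution_shift
    (lam : H →ₗ[k] k) (hlam_ne : lam ≠ 0)
    (hlam_int : ∀ f : H →ₗ[k] k, conv f lam = f 1 • lam)
    (a : H) (ha_ne : a ≠ 0) (ha_grp : Coalgebra.comul (R := k) a = a ⊗ₜ[k] a)
    (ha_mod : ∀ h : H, lT lam h = lam h • (𝐒 a))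
    (ha_S2 : ∀ h : H, lam (𝐒 (𝐒 h)) = lam (a * h * 𝐒 a))
    (Sinv : H →ₗ[k] H) (hSinv_l : ∀ h : H, Sinv (𝐒 h) = h)
    (hSinv_r : ∀ h : H, 𝐒 (Sinv h) = h) :
    ∀ (p : H →ₗ[k] k) (h l : H),
      (conv (lam ∘ₗ LinearMap.mulLeft k h) p l =
        conv (lam ∘ₗ LinearMap.mulRight k l)
          (p ∘ₗ (LinearMap.mulRight k (𝐒 a)) ∘ₗ Sinv) h) ∧
      (conv p (lam ∘ₗ LinearMap.mulRight k h) l =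
        conv (p ∘ₗ Sinv) (lam ∘ₗ LinearMap.mulLeft k l) h) :=
  integral_convolution_shift_general lam hlam_int a ha_mod Sinv hSinv_l hSinv_r
end
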